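/- arXiv:2209.14356 — 2 statements merged into one kernel-verified Lean document; each statement's English description precedes it below -/
import Mathlib

section
/- A linear map T: V ⊗ V → V ⊗ V satisfies the pentagon equation T₂₃T₁₂ = T₁₂T₁₃T₂₃ if and only if T' := τ ∘ T satisfies the 3-cocycle condition (T' ⊗ id)∘(id ⊗ τ)∘(T' ⊗ id) = (id ⊗ T')∘(T' ⊗ id)∘(id ⊗ T'). -/
open TensorProduct

variable {V : Type*} [AddCommGroup V] [Module ℂ V] [FiniteDimensional ℂ V]

/-- The twist map `τ : V ⊗ V → V ⊗ V`, `x ⊗ y ↦ y ⊗ x`. -/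
noncomputable def twist (V : Type*) [AddCommGroup V] [Module ℂ V] :
    V ⊗[ℂ] V →ₗ[ℂ] V ⊗[ℂ] V :=
  (TensorProduct.comm ℂ V V).toLinearMap

/-- `T₁₂ = T ⊗ id` acting on `V ⊗ V ⊗ V`. -/
noncomputable def op12 (T : V ⊗[ℂ] V →ₗ[ℂ] V ⊗[ℂ] V) :
    V ⊗[ℂ] (V ⊗[ℂ] V) →ₗ[ℂ] V ⊗[ℂ] (V ⊗[ℂ] V) :=
  (TensorProduct.assoc ℂ V V V).toLinearMap ∘ₗ
    TensorProduct.map T LinearMap.id ∘ₗ (TensorProduct.assoc ℂ V V V).symm.toLinearMap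

/-- `T₂₃ = id ⊗ T` acting on `V ⊗ V ⊗ V`. -/
noncomputable def op23 (T : V ⊗[ℂ] V →ₗ[ℂ] V ⊗[ℂ] V) :
    V ⊗[ℂ] (V ⊗[ℂ] V) →ₗ[ℂ] V ⊗[ℂ] (V ⊗[ℂ] V) :=
  LinearMap.lTensor V T

/-- `T₁₃ = (id ⊗ τ)⁻¹ ∘ (T ⊗ id) ∘ (id ⊗ τ)` acting on `V ⊗ V ⊗ V`. -/
noncomputable def op13 (T : V ⊗[ℂ] V →ₗ[ℂ] V ⊗[ℂ] V) :
    V ⊗[ℂ] (V ⊗[ℂ] V) →ₗ[ℂ] V ⊗[ℂ] (V ⊗[ℂ] V) :=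
  LinearMap.lTensor V (TensorProduct.comm ℂ V V).symm.toLinearMap ∘ₗ
    op12 T ∘ₗ LinearMap.lTensor V (twist V)

/-- The pentagon equation `T₂₃T₁₂ = T₁₂T₁₃T₂₃`. -/
def PentagonEq (T : V ⊗[ℂ] V →ₗ[ℂ] V ⊗[ℂ] V) : Prop :=
  op23 T ∘ₗ op12 T = op12 T ∘ₗ op13 T ∘ₗ op23 T

/-- The Yang–Baxter equation `R₁₂R₂₃R₁₂ = R₂₃R₁₂R₂₃`. -/
def YangBaxterEq (R : V ⊗[ℂ] V →ₗ[ℂ] V ⊗[ℂ] V) : Prop :=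
  op12 R ∘ₗ op23 R ∘ₗ op12 R = op23 R ∘ₗ op12 R ∘ₗ op23 R

/-- The 3-cocycle condition `(T'⊗id)∘(id⊗τ)∘(T'⊗id) = (id⊗T')∘(T'⊗id)∘(id⊗T')`. -/
def ThreeCocycle (T' : V ⊗[ℂ] V →ₗ[ℂ] V ⊗[ℂ] V) : Prop :=
  op12 T' ∘ₗ LinearMap.lTensor V (twist V) ∘ₗ op12 T' =
    op23 T' ∘ₗ op12 T' ∘ₗ op23 T'

/-!
Write `P = τ₁₂`, `Q = τ₂₃` and `σ = τ₁₃` for the transpositions of `V ⊗ V ⊗ V`, and `T' = τ ∘ T`,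
so that `T'₁₂ = P T₁₂` and `T'₂₃ = Q T₂₃`. Moving `σ` past `T₂₃` and `T₁₂` turns them into
`T'₁₂ Q P` and `T'₂₃ P Q`. Hence applying the involution `σ` to both sides of the pentagon equation
`T₂₃ T₁₂ = T₁₂ (Q T₁₂ Q) T₂₃` yields exactly the two sides of the 3-cocycle condition for `T'`.
-/

section
variable {E : Type*} [AddCommGroup E] [Module ℂ E]

theorem twist_comp_twist : twist E ∘ₗ twist E = LinearMap.id := by
  ext x y; rfl

theorem op12_comp (S T : E ⊗[ℂ] E →ₗ[ℂ] E ⊗[ℂ] E) :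
    op12 (S ∘ₗ T) = op12 S ∘ₗ op12 T := by
  ext x y z; simp [op12]

theorem op23_comp (S T : E ⊗[ℂ] E →ₗ[ℂ] E ⊗[ℂ] E) :
    op23 (S ∘ₗ T) = op23 S ∘ₗ op23 T :=
  LinearMap.lTensor_comp E S T

theorem op23_twist_comp_op23_twist : op23 (twist E) ∘ₗ op23 (twist E) = LinearMap.id := by
  rw [← op23_comp, twist_comp_twist]; exact LinearMap.lTensor_id E _

theorem op13_twist_comp_op13_twist : op13 (twist E) ∘ₗ op13 (twist E) = LinearMap.id := by
  ext x y z; rfl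

theorem op13_eq_conj (T : E ⊗[ℂ] E →ₗ[ℂ] E ⊗[ℂ] E) :
    op13 T = op23 (twist E) ∘ₗ op12 T ∘ₗ op23 (twist E) := rfl

theorem op13_twist_tmul (x : E) (u : E ⊗[ℂ] E) :
    op13 (twist E) (x ⊗ₜ u) = TensorProduct.assoc ℂ E E E (twist E u ⊗ₜ x) := by
  induction u using TensorProduct.induction_on with
  | zero => simp
  | tmul a b => rfl
  | add u v hu hv => simp only [tmul_add, map_add, add_tmul, hu, hv]

theorem op13_twist_assoc_tmul (u : E ⊗[ℂ] E) (x : E) :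
    op13 (twist E) (TensorProduct.assoc ℂ E E E (u ⊗ₜ x)) = x ⊗ₜ twist E u := by
  induction u using TensorProduct.induction_on with
  | zero => simp
  | tmul a b => rfl
  | add u v hu hv => simp only [tmul_add, map_add, add_tmul, hu, hv]

theorem op13_twist_comp_op23 (T : E ⊗[ℂ] E →ₗ[ℂ] E ⊗[ℂ] E) :
    op13 (twist E) ∘ₗ op23 T = op12 (twist E ∘ₗ T) ∘ₗ op23 (twist E) ∘ₗ op12 (twist E) := by
  ext x y z
  exact op13_twist_tmul x (T (y ⊗ₜ z))

theorem op13_twist_comp_op12 (T : E ⊗[ℂ] E →ₗ[ℂ] E ⊗[ℂ] E) :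
    op13 (twist E) ∘ₗ op12 T = op23 (twist E ∘ₗ T) ∘ₗ op12 (twist E) ∘ₗ op23 (twist E) := by
  ext x y z
  exact op13_twist_assoc_tmul (T (x ⊗ₜ y)) z

theorem op13_twist_comp_injective :
    Function.Injective (op13 (twist E) ∘ₗ · : Module.End ℂ (E ⊗[ℂ] (E ⊗[ℂ] E)) → _) :=
  Function.LeftInverse.injective (g := (op13 (twist E) ∘ₗ ·)) fun A => by
    dsimp only
    rw [← LinearMap.comp_assoc, op13_twist_comp_op13_twist, LinearMap.id_comp]

end

theorem pentagon_iff_threeCocycle (T : V ⊗[ℂ] V →ₗ[ℂ] V ⊗[ℂ] V) :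
    PentagonEq T ↔ ThreeCocycle (twist V ∘ₗ T) := by
  have lhs : op13 (twist V) ∘ₗ op23 T ∘ₗ op12 T =
      op12 (twist V ∘ₗ T) ∘ₗ op23 (twist V) ∘ₗ op12 (twist V ∘ₗ T) := by
    rw [← LinearMap.comp_assoc, op13_twist_comp_op23, op12_comp]
    simp only [LinearMap.comp_assoc]
  have rhs : op13 (twist V) ∘ₗ op12 T ∘ₗ op13 T ∘ₗ op23 T =
      op23 (twist V ∘ₗ T) ∘ₗ op12 (twist V ∘ₗ T) ∘ₗ op23 (twist V ∘ₗ T) := by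
    rw [← LinearMap.comp_assoc, op13_twist_comp_op12, op13_eq_conj, op12_comp, op23_comp]
    simp only [LinearMap.comp_assoc]
    rw [← LinearMap.comp_assoc _ (op23 (twist V)) (op23 (twist V)), op23_twist_comp_op23_twist,
      LinearMap.id_comp]
  rw [PentagonEq, ThreeCocycle, ← op13_twist_comp_injective.eq_iff, lhs, rhs]
  exact Iff.rfl
end

section
/- Let B be a bialgebra over ℂ with multiplication m: B ⊗ B → B and comultiplication δ: B → B ⊗ B. Then the map T := (id_B ⊗ m) ∘ (δ ⊗ id_B) : B ⊗ B → B ⊗ B satisfies the pentagon equation T₂₃T₁₂ = T₁₂T₁₃T₂₃. -/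
open TensorProduct

variable {V : Type*} [AddCommGroup V] [Module ℂ V] [FiniteDimensional ℂ V]

/-- The fusion operator `T = (id ⊗ m) ∘ (δ ⊗ id)` of a bialgebra `B`. -/
noncomputable def fusionOp (B : Type*) [Ring B] [Bialgebra ℂ B] :
    B ⊗[ℂ] B →ₗ[ℂ] B ⊗[ℂ] B :=
  LinearMap.lTensor B (LinearMap.mul' ℂ B) ∘ₗ
    (TensorProduct.assoc ℂ B B B).toLinearMap ∘ₗ
      LinearMap.rTensor B Coalgebra.comul

/-!
In the algebra `B ⊗ B` the fusion operator is `T (x ⊗ y) = Δ x * (1 ⊗ y)`, so `T₁₂` commutes with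
right multiplication by `1 ⊗ B ⊗ B`. Since `Δ` is multiplicative,
`T₂₃ T₁₂ (x ⊗ y ⊗ z) = (id ⊗ Δ) (Δ x) * (1 ⊗ Δ y) * (1 ⊗ 1 ⊗ z)`, while
`T₁₃ (x ⊗ w) = (∑ x₁ ⊗ 1 ⊗ x₂) * (1 ⊗ w)` gives
`T₁₂ T₁₃ T₂₃ (x ⊗ y ⊗ z) = (Δ ⊗ id) (Δ x) * (1 ⊗ Δ y * (1 ⊗ z))`.
Coassociativity identifies the two.
-/

section Algebra

variable {R A : Type*} [CommSemiring R] [Semiring A] [Algebra R A]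

lemma TensorProduct.lTensor_mul'_assoc_tmul (w : A ⊗[R] A) (c : A) :
    LinearMap.lTensor A (LinearMap.mul' R A) (TensorProduct.assoc R A A A (w ⊗ₜ c)) =
      w * (1 ⊗ₜ c) := by
  induction w using TensorProduct.induction_on with
  | zero => simp
  | tmul a b => simp
  | add u v hu hv => simp [add_tmul, hu, hv, add_mul]

lemma TensorProduct.assoc_mul (u v : (A ⊗[R] A) ⊗[R] A) :
    TensorProduct.assoc R A A A (u * v) =
      TensorProduct.assoc R A A A u * TensorProduct.assoc R A A A v :=
  map_mul (Algebra.TensorProduct.assoc R R R A A A) u v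

lemma LinearMap.lTensor_comm_symm_mul (u v : A ⊗[R] (A ⊗[R] A)) :
    LinearMap.lTensor A (TensorProduct.comm R A A).symm.toLinearMap (u * v) =
      LinearMap.lTensor A (TensorProduct.comm R A A).symm.toLinearMap u *
        LinearMap.lTensor A (TensorProduct.comm R A A).symm.toLinearMap v :=
  map_mul (Algebra.TensorProduct.lTensor A (Algebra.TensorProduct.comm R A A).symm.toAlgHom) u v

end Algebra

lemma Bialgebra.lTensor_comul_mul {R A : Type*} [CommSemiring R] [Semiring A] [Bialgebra R A]
    (u v : A ⊗[R] A) :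
    LinearMap.lTensor A (Coalgebra.comul (R := R)) (u * v) =
      LinearMap.lTensor A Coalgebra.comul u * LinearMap.lTensor A Coalgebra.comul v :=
  map_mul (Algebra.TensorProduct.lTensor A (Bialgebra.comulAlgHom R A)) u v

lemma op12_tmul_tmul {M : Type*} [AddCommGroup M] [Module ℂ M] (T : M ⊗[ℂ] M →ₗ[ℂ] M ⊗[ℂ] M)
    (x y z : M) : op12 T (x ⊗ₜ (y ⊗ₜ z)) = TensorProduct.assoc ℂ M M M (T (x ⊗ₜ y) ⊗ₜ z) := by
  simp [op12]

section Fusion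

variable {B : Type*} [Ring B] [Bialgebra ℂ B]

open Coalgebra

lemma fusionOp_tmul (x y : B) : fusionOp B (x ⊗ₜ y) = comul x * (1 ⊗ₜ y) := by
  simp [fusionOp, TensorProduct.lTensor_mul'_assoc_tmul]

lemma op23_fusionOp_assoc_tmul (w : B ⊗[ℂ] B) (z : B) :
    op23 (fusionOp B) (TensorProduct.assoc ℂ B B B (w ⊗ₜ z)) =
      LinearMap.lTensor B comul w * (1 ⊗ₜ (1 ⊗ₜ z)) := by
  induction w using TensorProduct.induction_on with
  | zero => simp
  | tmul a b => simp [op23, fusionOp_tmul]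
  | add u v hu hv => simp [add_tmul, hu, hv, add_mul]

lemma op12_fusionOp_mul_one_tmul (u : B ⊗[ℂ] (B ⊗[ℂ] B)) (w : B ⊗[ℂ] B) :
    op12 (fusionOp B) (u * (1 ⊗ₜ w)) = op12 (fusionOp B) u * (1 ⊗ₜ w) := by
  induction w using TensorProduct.induction_on with
  | zero => simp
  | add w w' hw hw' => rw [tmul_add, mul_add, mul_add, map_add, hw, hw']
  | tmul d e =>
    induction u using TensorProduct.induction_on with
    | zero => simp
    | add u v hu hv => rw [add_mul, map_add, hu, hv, map_add, add_mul]
    | tmul a v =>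
      induction v using TensorProduct.induction_on with
      | zero => simp
      | add v v' hv hv' => rw [tmul_add, add_mul, map_add, hv, hv', map_add, add_mul]
      | tmul b c =>
        have hde : (1 : B) ⊗ₜ[ℂ] (d ⊗ₜ[ℂ] e) = TensorProduct.assoc ℂ B B B ((1 ⊗ₜ d) ⊗ₜ e) :=
          rfl
        rw [Algebra.TensorProduct.tmul_mul_tmul, Algebra.TensorProduct.tmul_mul_tmul, mul_one,
          op12_tmul_tmul, op12_tmul_tmul, fusionOp_tmul, fusionOp_tmul, hde,
          ← TensorProduct.assoc_mul, Algebra.TensorProduct.tmul_mul_tmul, mul_assoc,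
          Algebra.TensorProduct.tmul_mul_tmul, one_mul]

lemma op13_fusionOp_tmul (x : B) (w : B ⊗[ℂ] B) :
    op13 (fusionOp B) (x ⊗ₜ w) =
      LinearMap.lTensor B (TensorProduct.comm ℂ B B).symm.toLinearMap
        (TensorProduct.assoc ℂ B B B (comul x ⊗ₜ 1)) * (1 ⊗ₜ w) := by
  have hx : x ⊗ₜ[ℂ] TensorProduct.comm ℂ B B w =
      (x ⊗ₜ (1 ⊗ₜ 1)) * (1 ⊗ₜ TensorProduct.comm ℂ B B w) := by
    rw [Algebra.TensorProduct.tmul_mul_tmul, mul_one, ← Algebra.TensorProduct.one_def, one_mul]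
  simp only [op13, twist, LinearMap.comp_apply, LinearMap.lTensor_tmul, LinearEquiv.coe_coe]
  rw [hx, op12_fusionOp_mul_one_tmul, op12_tmul_tmul, fusionOp_tmul,
    LinearMap.lTensor_comm_symm_mul]
  simp [← Algebra.TensorProduct.one_def]

lemma op12_fusionOp_lTensor_comm_symm_assoc (u : B ⊗[ℂ] B) :
    op12 (fusionOp B) (LinearMap.lTensor B (TensorProduct.comm ℂ B B).symm.toLinearMap
        (TensorProduct.assoc ℂ B B B (u ⊗ₜ 1))) =
      TensorProduct.assoc ℂ B B B (LinearMap.rTensor B comul u) := by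
  induction u using TensorProduct.induction_on with
  | zero => simp
  | tmul a b => simp [op12_tmul_tmul, fusionOp_tmul, ← Algebra.TensorProduct.one_def]
  | add u v hu hv => simp only [add_tmul, map_add, hu, hv]

lemma op12_op13_fusionOp_tmul (x : B) (w : B ⊗[ℂ] B) :
    op12 (fusionOp B) (op13 (fusionOp B) (x ⊗ₜ w)) =
      TensorProduct.assoc ℂ B B B (LinearMap.rTensor B comul (comul x)) * (1 ⊗ₜ w) := by
  rw [op13_fusionOp_tmul, op12_fusionOp_mul_one_tmul, op12_fusionOp_lTensor_comm_symm_assoc]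

end Fusion

theorem bialgebra_fusionOp_pentagon (B : Type*) [Ring B] [Bialgebra ℂ B] :
    PentagonEq (fusionOp B) := by
  refine TensorProduct.ext_threefold' fun x y z => ?_
  have lhs : op23 (fusionOp B) (op12 (fusionOp B) (x ⊗ₜ (y ⊗ₜ z))) =
      LinearMap.lTensor B Coalgebra.comul (Coalgebra.comul x) * (1 ⊗ₜ Coalgebra.comul y) *
        (1 ⊗ₜ (1 ⊗ₜ z)) := by
    rw [op12_tmul_tmul, op23_fusionOp_assoc_tmul, fusionOp_tmul, Bialgebra.lTensor_comul_mul,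
      LinearMap.lTensor_tmul]
  have rhs : op12 (fusionOp B) (op13 (fusionOp B) (op23 (fusionOp B) (x ⊗ₜ (y ⊗ₜ z)))) =
      TensorProduct.assoc ℂ B B B (LinearMap.rTensor B Coalgebra.comul (Coalgebra.comul x)) *
        (1 ⊗ₜ (Coalgebra.comul y * (1 ⊗ₜ z))) := by
    rw [op23, LinearMap.lTensor_tmul, fusionOp_tmul, op12_op13_fusionOp_tmul]
  simp only [LinearMap.comp_apply, lhs, rhs, Coalgebra.coassoc_apply, mul_assoc,
    Algebra.TensorProduct.tmul_mul_tmul, one_mul]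
end
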